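/- arXiv:1806.02959 — 4 statements merged into one kernel-verified Lean document; each statement's English description precedes it below -/
import Mathlib

section
/- For every 0 ≤ i ≤ m, the rational number p_i = 4^{m−i} · (n+r+2)/(n+r−2i+2) · ∏_{j=0}^{i−1} (n+r−2j)² · ∏_{ν=i}^{m−1} (n−ν) is a positive integer. -/
/-- With `r = -s-2` and `m = (n+r)/2`, the rational number
`p_i = 4^{m-i} · (n+r+2)/(n+r-2i+2) · ∏_{j=0}^{i-1} (n+r-2j)² · ∏_{ν=i}^{m-1} (n-ν)`,
where an empty product equals `1`. -/
noncomputable def pcoef (n s m i : ℕ) : ℚ :=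
  (4 : ℚ) ^ (m - i) *
    (((n : ℚ) + (-(s : ℚ) - 2) + 2) / ((n : ℚ) + (-(s : ℚ) - 2) - 2 * (i : ℚ) + 2)) *
    (∏ j ∈ Finset.range i, ((n : ℚ) + (-(s : ℚ) - 2) - 2 * (j : ℚ)) ^ 2) *
    (∏ ν ∈ Finset.Ico i m, ((n : ℚ) - (ν : ℚ)))

/-!
Since `n + r = 2m`, we have `∏_{j<i} (n+r-2j)² = 4^i (m)_i²` with `(m)_i = m(m-1)⋯(m-i+1)` the
falling factorial, and `(n+r+2)/(n+r-2i+2) · (m)_i = (m+1)/(m+1-i) · (m)_i = (m+1)_i`. Hence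
`p_i = 4^m (m+1)_i (m)_i ∏_{ν=i}^{m-1} (n-ν)`, a product of positive integers because `ν < m ≤ n`.
-/

open Finset

theorem Nat.cast_descFactorial_eq_prod_range {R : Type*} [CommRing R] (m k : ℕ) :
    (m.descFactorial k : R) = ∏ j ∈ range k, ((m : R) - j) := by
  rw [← descPochhammer_eval_eq_descFactorial, descPochhammer_eval_eq_prod_range]

theorem prod_range_two_mul_sub_sq {R : Type*} [CommRing R] (m i : ℕ) :
    ∏ j ∈ range i, (2 * (m : R) - 2 * j) ^ 2 = 4 ^ i * (m.descFactorial i : R) ^ 2 := by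
  have h4 : (4 : R) = 2 ^ 2 := by norm_num
  simp only [← mul_sub, mul_pow, prod_mul_distrib, prod_const, card_range, prod_pow,
    Nat.cast_descFactorial_eq_prod_range, h4, ← pow_mul, mul_comm 2 i]

theorem div_mul_descFactorial_eq_succ_descFactorial {K : Type*} [Field K] [CharZero K]
    {m i : ℕ} (hi : i ≤ m) :
    (2 * (m : K) + 2) / (2 * m - 2 * i + 2) * m.descFactorial i = (m + 1).descFactorial i := by
  have hsucc : ((m + 1 - i : ℕ) : K) * (m + 1).descFactorial i = (m + 1) * m.descFactorial i := by
    exact_mod_cast Nat.succ_descFactorial m i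
  have hne : (m : K) + 1 - i ≠ 0 := by
    rw [← Nat.cast_succ, ← Nat.cast_sub (by omega), Nat.cast_ne_zero]
    omega
  rw [Nat.cast_sub (by omega), Nat.cast_succ] at hsucc
  have hfrac : (2 * (m : K) + 2) / (2 * m - 2 * i + 2) = (m + 1) / (m + 1 - i) := by
    rw [← mul_div_mul_left ((m : K) + 1) _ two_ne_zero]
    ring_nf
  rw [hfrac, div_mul_eq_mul_div, ← hsucc, mul_div_cancel_left₀ _ hne]

theorem pcoef_eq {n s m i : ℕ} (hm : n = s + 2 + 2 * m) (hi : i ≤ m) :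
    pcoef n s m i = 4 ^ m * (m + 1).descFactorial i * m.descFactorial i *
      ∏ ν ∈ Ico i m, ((n - ν : ℕ) : ℚ) := by
  have hnr : (n : ℚ) + (-(s : ℚ) - 2) = 2 * m := by rw [hm]; push_cast; ring
  have hIco : ∏ ν ∈ Ico i m, ((n - ν : ℕ) : ℚ) = ∏ ν ∈ Ico i m, ((n : ℚ) - ν) :=
    prod_congr rfl fun ν hν => Nat.cast_sub (by have := (mem_Ico.mp hν).2; omega)
  have hpow : (4 : ℚ) ^ m = 4 ^ (m - i) * 4 ^ i := by rw [← pow_add, Nat.sub_add_cancel hi]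
  rw [pcoef, hnr, prod_range_two_mul_sub_sq, hIco, hpow,
    ← div_mul_descFactorial_eq_succ_descFactorial (K := ℚ) hi]
  ring

theorem stmt10_general (n s m : ℕ) (hm : n = s + 2 + 2 * m) :
    ∀ i ≤ m, ∃ N : ℕ, 0 < N ∧ pcoef n s m i = (N : ℚ) := by
  intro i hi
  refine ⟨4 ^ m * (m + 1).descFactorial i * m.descFactorial i * ∏ ν ∈ Ico i m, (n - ν),
    ?_, by rw [pcoef_eq hm hi]; push_cast; rfl⟩
  have hIco : 0 < ∏ ν ∈ Ico i m, (n - ν) :=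
    prod_pos fun ν hν => by have := (mem_Ico.mp hν).2; omega
  have := Nat.descFactorial_pos.mpr (by omega : i ≤ m + 1)
  have := Nat.descFactorial_pos.mpr hi
  positivity

/-- Fix `n ≥ 2`, `0 ≤ s ≤ n-2` with `n - s` even, `r = -s-2` and `m = (n+r)/2`
(encoded by `n = s + 2 + 2m`).  Then for every `0 ≤ i ≤ m`, the rational number
`p_i` is a positive integer. -/
theorem stmt10 (n s m : ℕ) (hn : 2 ≤ n) (hm : n = s + 2 + 2 * m) :
    ∀ i ≤ m, ∃ N : ℕ, 0 < N ∧ pcoef n s m i = (N : ℚ) :=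
  stmt10_general n s m hm
end

section
/- The vector u_s := Σ_{j=0}^{m} p_j · (v_j ⊗ w_{m+1−j}) in the tensor product model M of L_n ⊗ V_0 is nonzero and is a highest weight vector of weight s: it satisfies E(u_s) = 0 and H(u_s) = s·u_s. -/
/-- The tensor product model `M` of `L_n ⊗ V_0`: finitely supported functions on
`{0,…,n} × ℕ`, with standard basis vectors `v_i ⊗ w_k`. -/
abbrev TM (n : ℕ) : Type := (Fin (n + 1) × ℕ) →₀ ℂ

/-- The basis vector `v_i ⊗ w_k` of `M`, with the convention that it is `0`
whenever `i < 0`, `i > n` or `k < 0`. -/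
noncomputable def bv (n : ℕ) (i k : ℤ) : TM n :=
  if h : 0 ≤ i ∧ i < (n : ℤ) + 1 ∧ 0 ≤ k then
    Finsupp.single (⟨i.toNat, by omega⟩, k.toNat) (1 : ℂ)
  else 0

/-- The coefficient of `v_i ⊗ w_k` in `u`, interpreted as `0` for out-of-range
indices. -/
noncomputable def cf (n : ℕ) (u : TM n) (i k : ℤ) : ℂ :=
  if h : 0 ≤ i ∧ i < (n : ℤ) + 1 ∧ 0 ≤ k then u (⟨i.toNat, by omega⟩, k.toNat) else 0

/-- `F(v_i ⊗ w_k) = (i+1)·v_{i+1} ⊗ w_k + v_i ⊗ w_{k+1}`. -/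
noncomputable def FM (n : ℕ) : Module.End ℂ (TM n) :=
  Finsupp.lsum ℂ fun p => LinearMap.toSpanSingleton ℂ (TM n)
    ((((p.1 : ℕ) : ℂ) + 1) • bv n (((p.1 : ℕ) : ℤ) + 1) ((p.2 : ℤ)) +
      bv n ((p.1 : ℕ) : ℤ) ((p.2 : ℤ) + 1))

/-- `E(v_i ⊗ w_k) = (n-i+1)·v_{i-1} ⊗ w_k - k(k-1)·v_i ⊗ w_{k-1}`. -/
noncomputable def EM (n : ℕ) : Module.End ℂ (TM n) :=
  Finsupp.lsum ℂ fun p => LinearMap.toSpanSingleton ℂ (TM n)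
    (((n : ℂ) - ((p.1 : ℕ) : ℂ) + 1) • bv n (((p.1 : ℕ) : ℤ) - 1) ((p.2 : ℤ)) -
      (((p.2 : ℕ) : ℂ) * (((p.2 : ℕ) : ℂ) - 1)) • bv n ((p.1 : ℕ) : ℤ) ((p.2 : ℤ) - 1))

/-- `H(v_i ⊗ w_k) = (n-2i-2k)·v_i ⊗ w_k`. -/
noncomputable def HM (n : ℕ) : Module.End ℂ (TM n) :=
  Finsupp.lsum ℂ fun p => LinearMap.toSpanSingleton ℂ (TM n)
    (((n : ℂ) - 2 * ((p.1 : ℕ) : ℂ) - 2 * ((p.2 : ℕ) : ℂ)) • bv n ((p.1 : ℕ) : ℤ) ((p.2 : ℤ)))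

lemma bv_natCast (n i k : ℕ) (hi : i ≤ n) :
    bv n (i : ℤ) (k : ℤ) = Finsupp.single (⟨i, by omega⟩, k) 1 := by
  have h : 0 ≤ (i : ℤ) ∧ (i : ℤ) < (n : ℤ) + 1 ∧ 0 ≤ (k : ℤ) := by omega
  rw [bv, dif_pos h]
  simp only [Int.toNat_natCast]

lemma bv_out (n : ℕ) (i k : ℤ) (h : ¬(0 ≤ i ∧ i < (n : ℤ) + 1 ∧ 0 ≤ k)) :
    bv n i k = 0 := by
  rw [bv, dif_neg h]

lemma EM_bv (n i k : ℕ) (hi : i ≤ n) :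
    EM n (bv n (i : ℤ) (k : ℤ)) =
      ((n : ℂ) - (i : ℂ) + 1) • bv n ((i : ℤ) - 1) (k : ℤ) -
        ((k : ℂ) * ((k : ℂ) - 1)) • bv n (i : ℤ) ((k : ℤ) - 1) := by
  rw [bv_natCast n i k hi, EM, Finsupp.lsum_single, LinearMap.toSpanSingleton_apply, one_smul]

lemma HM_bv (n i k : ℕ) (hi : i ≤ n) :
    HM n (bv n (i : ℤ) (k : ℤ)) =
      ((n : ℂ) - 2 * (i : ℂ) - 2 * (k : ℂ)) • bv n (i : ℤ) (k : ℤ) := by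
  rw [bv_natCast n i k hi, HM, Finsupp.lsum_single, LinearMap.toSpanSingleton_apply, one_smul]
  simp [bv_natCast n i k hi]

lemma pcoef_rec (n s m : ℕ) (hm : n = s + 2 + 2 * m) (j : ℕ) (hj : j < m) :
    pcoef n s m (j + 1) * ((n : ℚ) - (j : ℚ)) =
      pcoef n s m j * (((m : ℚ) + 1 - (j : ℚ)) * ((m : ℚ) - (j : ℚ))) := by
  have hn : (n : ℚ) = (s : ℚ) + 2 + 2 * (m : ℚ) := by
    rw [hm]; push_cast; ring
  have hjm : (j : ℚ) ≤ (m : ℚ) - 1 := by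
    have : (j : ℚ) + 1 ≤ (m : ℚ) := by exact_mod_cast hj
    linarith
  unfold pcoef
  rw [Finset.prod_range_succ, Finset.prod_eq_prod_Ico_succ_bot hj,
    show m - j = (m - (j + 1)) + 1 by omega, pow_succ]
  push_cast
  rw [hn]
  have h1 : (s : ℚ) + 2 + 2 * (m : ℚ) + (-(s : ℚ) - 2) - 2 * (j : ℚ) + 2 ≠ 0 := by
    intro h; nlinarith
  have h2 : (s : ℚ) + 2 + 2 * (m : ℚ) + (-(s : ℚ) - 2) - 2 * ((j : ℚ) + 1) + 2 ≠ 0 := by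
    intro h; nlinarith
  field_simp
  ring

lemma pcoef_zero_ne (n s m : ℕ) (hm : n = s + 2 + 2 * m) : pcoef n s m 0 ≠ 0 := by
  have hns : (n : ℚ) + (-(s : ℚ) - 2) + 2 ≠ 0 := by
    have : (n : ℚ) = (s : ℚ) + 2 + 2 * (m : ℚ) := by rw [hm]; push_cast; ring
    rw [this]; intro h; nlinarith [Nat.cast_nonneg (α := ℚ) m]
  unfold pcoef
  push_cast
  apply mul_ne_zero
  apply mul_ne_zero
  apply mul_ne_zero
  · positivity
  · apply div_ne_zero hns
    simpa using hns
  · simp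
  · rw [Finset.prod_ne_zero_iff]
    intro ν hν
    simp only [Finset.mem_Ico] at hν
    have : ν < n := by omega
    have : (ν : ℚ) < (n : ℚ) := by exact_mod_cast this
    intro h; linarith


/-- Fix `n ≥ 2`, `0 ≤ s ≤ n-2` with `n - s` even, `r = -s-2`, `m = (n+r)/2`
(encoded by `n = s + 2 + 2m`).  Then the vector
`u_s = Σ_{j=0}^{m} p_j · (v_j ⊗ w_{m+1-j})` in the tensor product model `M` of
`L_n ⊗ V_0` is nonzero and is a highest weight vector of weight `s`:
`E(u_s) = 0` and `H(u_s) = s·u_s`. -/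
theorem stmt11 (n s m : ℕ) (hn : 2 ≤ n) (hm : n = s + 2 + 2 * m) :
    (∑ j ∈ Finset.range (m + 1),
        ((pcoef n s m j : ℂ)) • bv n (j : ℤ) ((m : ℤ) + 1 - (j : ℤ))) ≠ 0 ∧
    EM n (∑ j ∈ Finset.range (m + 1),
        ((pcoef n s m j : ℂ)) • bv n (j : ℤ) ((m : ℤ) + 1 - (j : ℤ))) = 0 ∧
    HM n (∑ j ∈ Finset.range (m + 1),
        ((pcoef n s m j : ℂ)) • bv n (j : ℤ) ((m : ℤ) + 1 - (j : ℤ))) =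
      (s : ℂ) • (∑ j ∈ Finset.range (m + 1),
        ((pcoef n s m j : ℂ)) • bv n (j : ℤ) ((m : ℤ) + 1 - (j : ℤ))) := by
  have hncast : (n : ℂ) = (s : ℂ) + 2 + 2 * (m : ℂ) := by rw [hm]; push_cast; ring
  refine ⟨?_, ?_, ?_⟩
  · -- nonzero
    intro h0
    have hval : (∑ j ∈ Finset.range (m + 1),
        ((pcoef n s m j : ℂ)) • bv n (j : ℤ) ((m : ℤ) + 1 - (j : ℤ)))
          (⟨0, by omega⟩, m + 1) = (pcoef n s m 0 : ℂ) := by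
      rw [Finsupp.finset_sum_apply, Finset.sum_eq_single 0]
      · rw [show ((m : ℤ) + 1 - ((0 : ℕ) : ℤ)) = (((m + 1 : ℕ)) : ℤ) by push_cast; ring,
          bv_natCast n 0 (m + 1) (by omega), Finsupp.smul_apply, Finsupp.single_apply,
          if_pos rfl, smul_eq_mul, mul_one]
      · intro j hj hne
        simp only [Finset.mem_range] at hj
        rw [show ((m : ℤ) + 1 - (j : ℤ)) = (((m + 1 - j : ℕ)) : ℤ) by omega,
          bv_natCast n j (m + 1 - j) (by omega), Finsupp.smul_apply, Finsupp.single_apply,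
          if_neg, smul_zero]
        intro hEq
        exact hne (congrArg (fun p => p.1.1) hEq)
      · simp
    rw [h0] at hval
    simp only [Finsupp.coe_zero, Pi.zero_apply] at hval
    exact pcoef_zero_ne n s m hm (by exact_mod_cast hval.symm)
  · -- E part
    rw [map_sum]
    have step : ∀ j ∈ Finset.range (m + 1),
        EM n ((pcoef n s m j : ℂ) • bv n (j : ℤ) ((m : ℤ) + 1 - (j : ℤ))) =
          ((pcoef n s m j : ℂ) * ((n : ℂ) - (j : ℂ) + 1)) • bv n ((j : ℤ) - 1) ((m : ℤ) + 1 - (j : ℤ))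
            - ((pcoef n s m j : ℂ) * (((m : ℂ) + 1 - (j : ℂ)) * ((m : ℂ) + 1 - (j : ℂ) - 1))) •
                bv n (j : ℤ) ((m : ℤ) + 1 - (j : ℤ) - 1) := by
      intro j hj
      simp only [Finset.mem_range] at hj
      have hcast : ((m + 1 - j : ℕ) : ℂ) = (m : ℂ) + 1 - (j : ℂ) := by
        push_cast [Nat.cast_sub (show j ≤ m + 1 by omega)]; ring
      have hcast2 : (((m + 1 - j : ℕ)) : ℤ) = (m : ℤ) + 1 - (j : ℤ) := by omega
      rw [map_smul, show ((m : ℤ) + 1 - (j : ℤ)) = (((m + 1 - j : ℕ)) : ℤ) by omega,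
        EM_bv n j (m + 1 - j) (by omega), smul_sub, smul_smul, smul_smul, hcast, hcast2]
    rw [Finset.sum_congr rfl step, Finset.sum_sub_distrib]
    have hA : ∑ j ∈ Finset.range (m + 1),
        ((pcoef n s m j : ℂ) * ((n : ℂ) - (j : ℂ) + 1)) • bv n ((j : ℤ) - 1) ((m : ℤ) + 1 - (j : ℤ))
        = ∑ j ∈ Finset.range m,
          ((pcoef n s m (j + 1) : ℂ) * ((n : ℂ) - (j : ℂ))) • bv n (j : ℤ) ((m : ℤ) - (j : ℤ)) := by
      rw [Finset.sum_range_succ']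
      have h0 : bv n (((0 : ℕ) : ℤ) - 1) ((m : ℤ) + 1 - ((0 : ℕ) : ℤ)) = 0 := by
        apply bv_out; push_cast; simp
      rw [h0, smul_zero, add_zero]
      refine Finset.sum_congr rfl fun j hj => ?_
      have e1 : (((j + 1 : ℕ)) : ℤ) - 1 = (j : ℤ) := by push_cast; ring
      have e2 : (m : ℤ) + 1 - (((j + 1 : ℕ)) : ℤ) = (m : ℤ) - (j : ℤ) := by push_cast; ring
      have e3 : (n : ℂ) - (((j + 1 : ℕ)) : ℂ) + 1 = (n : ℂ) - (j : ℂ) := by push_cast; ring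
      rw [e1, e2, e3]
    have hB : ∑ j ∈ Finset.range (m + 1),
        ((pcoef n s m j : ℂ) * (((m : ℂ) + 1 - (j : ℂ)) * ((m : ℂ) + 1 - (j : ℂ) - 1))) •
            bv n (j : ℤ) ((m : ℤ) + 1 - (j : ℤ) - 1)
        = ∑ j ∈ Finset.range m,
          ((pcoef n s m j : ℂ) * (((m : ℂ) + 1 - (j : ℂ)) * ((m : ℂ) - (j : ℂ)))) •
            bv n (j : ℤ) ((m : ℤ) - (j : ℤ)) := by
      rw [Finset.sum_range_succ]
      have hz : ((m : ℂ) + 1 - (m : ℂ)) * ((m : ℂ) + 1 - (m : ℂ) - 1) = 0 := by ring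
      rw [hz, mul_zero, zero_smul, add_zero]
      refine Finset.sum_congr rfl fun j hj => ?_
      have e1 : (m : ℤ) + 1 - (j : ℤ) - 1 = (m : ℤ) - (j : ℤ) := by ring
      have e2 : (m : ℂ) + 1 - (j : ℂ) - 1 = (m : ℂ) - (j : ℂ) := by ring
      rw [e1, e2]
    rw [hA, hB, ← Finset.sum_sub_distrib]
    apply Finset.sum_eq_zero
    intro j hj
    simp only [Finset.mem_range] at hj
    rw [← sub_smul]
    have hrec : (pcoef n s m (j + 1) : ℂ) * ((n : ℂ) - (j : ℂ)) =
        (pcoef n s m j : ℂ) * (((m : ℂ) + 1 - (j : ℂ)) * ((m : ℂ) - (j : ℂ))) := by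
      exact_mod_cast congrArg (Rat.cast : ℚ → ℂ) (pcoef_rec n s m hm j hj)
    rw [hrec, sub_self, zero_smul]
  · -- H part
    rw [map_sum, Finset.smul_sum]
    refine Finset.sum_congr rfl fun j hj => ?_
    simp only [Finset.mem_range] at hj
    have hcast : ((m + 1 - j : ℕ) : ℂ) = (m : ℂ) + 1 - (j : ℂ) := by
      push_cast [Nat.cast_sub (show j ≤ m + 1 by omega)]; ring
    rw [map_smul, show ((m : ℤ) + 1 - (j : ℤ)) = (((m + 1 - j : ℕ)) : ℤ) by omega,
      HM_bv n j (m + 1 - j) (by omega), smul_smul, smul_smul, hcast]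
    congr 1
    rw [hncast]; ring
end

section
/- Fix integers n ≥ 2 and s with 0 ≤ s ≤ n−2 and n − s even, and set c = s(s+2). Let β : {0,…,n} × ℕ → ℂ be finitely supported with β_{ik} = 0 unless n − 2i − 2k = −s−2, and set a = Σ β_{ik}·(v_i ⊗ w_k) in the tensor product model M. Then (Ω − c)²(a) = 0 if and only if for every pair (i,k) with 0 ≤ i ≤ n, k ≥ 0, and n − 2i − 2k = −s−2: 0 = β_{i−2,k+2}·(i−1)·i·k·(k+1)²·(k+2) − β_{i−1,k+1}·i·k·(k+1)·(2i(n+2−i) − (n+2) − 2k²) + β_{ik}·((i(n−i+1) − k(k−1))² − i·k·(k+1)·(n−i+1) − (i+1)·(k−1)·k·(n−i)) + β_{i+1,k−1}·(n−i)·(n + 2i(n−i) − 2(k−1)²) + β_{i+2,k−2}·(n−i−1)·(n−i), where β at out-of-range indices is interpreted as 0. -/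
/-- The Casimir operator `Ω = H² + 2H + 4FE` on `M`. -/
noncomputable def CasM (n : ℕ) : Module.End ℂ (TM n) :=
  HM n * HM n + (2 : ℂ) • HM n + (4 : ℂ) • (FM n * EM n)

/-! On the weight space `n - 2i - 2k = w` the operator `H² + 2H` is the scalar `w² + 2w`, which
for `w = -s-2` is exactly `c = s(s+2)`; and `FE` preserves weight spaces. Hence `Ω - c` acts on
that weight space as `4FE`, so `(Ω - c)²a = 16 (FE)²a`. Reading off the coefficient of
`v_i ⊗ w_k` in `(FE)²a` with the explicit action of `F` and `E` gives the five-term expression. -/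

namespace TM

variable {n : ℕ}

lemma cf_zero (i k : ℤ) : cf n 0 i k = 0 := by
  unfold cf; split <;> simp

lemma cf_add (u v : TM n) (i k : ℤ) : cf n (u + v) i k = cf n u i k + cf n v i k := by
  unfold cf; split <;> simp

lemma cf_sub (u v : TM n) (i k : ℤ) : cf n (u - v) i k = cf n u i k - cf n v i k := by
  unfold cf; split <;> simp

lemma cf_smul (c : ℂ) (u : TM n) (i k : ℤ) : cf n (c • u) i k = c * cf n u i k := by
  unfold cf; split <;> simp

lemma cf_of_out_of_range (u : TM n) {i k : ℤ} (h : ¬(0 ≤ i ∧ i < (n : ℤ) + 1 ∧ 0 ≤ k)) :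
    cf n u i k = 0 :=
  dif_neg h

lemma cf_natCast (u : TM n) (j : Fin (n + 1)) (m : ℕ) :
    cf n u ((j : ℕ) : ℤ) (m : ℤ) = u (j, m) := by
  rw [cf, dif_pos ⟨by positivity, by exact_mod_cast j.isLt, by positivity⟩]
  rfl

lemma ext_cf {u v : TM n} (h : ∀ i k : ℕ, i ≤ n → cf n u i k = cf n v i k) : u = v := by
  ext ⟨j, m⟩
  rw [← cf_natCast, ← cf_natCast, h j m (Nat.lt_succ_iff.mp j.isLt)]

lemma eq_zero_iff_forall_cf {u : TM n} : u = 0 ↔ ∀ i k : ℕ, i ≤ n → cf n u i k = 0 := by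
  refine ⟨fun hu i k _ => hu ▸ cf_zero _ _, fun h => ext_cf fun i k hi => ?_⟩
  rw [h i k hi, cf_zero]

lemma cf_single (j : Fin (n + 1)) (m : ℕ) (c : ℂ) (i k : ℤ) :
    cf n (Finsupp.single (j, m) c) i k = if i = (j : ℤ) ∧ k = (m : ℤ) then c else 0 := by
  by_cases hik : 0 ≤ i ∧ i < (n : ℤ) + 1 ∧ 0 ≤ k
  · lift i to ℕ using hik.1
    lift k to ℕ using hik.2.2
    have hi : i < n + 1 := by exact_mod_cast hik.2.1
    rw [show (i : ℤ) = ((⟨i, hi⟩ : Fin (n + 1)) : ℕ) from rfl, cf_natCast, Finsupp.single_apply]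
    simp only [Prod.ext_iff, Fin.ext_iff, Nat.cast_inj, eq_comm]
  · rw [cf_of_out_of_range _ hik, if_neg]
    rintro ⟨rfl, rfl⟩
    exact hik ⟨by positivity, by exact_mod_cast j.isLt, by positivity⟩

lemma cf_bv (i' k' i k : ℤ) :
    cf n (bv n i' k') i k =
      if i = i' ∧ k = k' ∧ 0 ≤ i ∧ i < (n : ℤ) + 1 ∧ 0 ≤ k then 1 else 0 := by
  unfold bv
  split_ifs with h' h h
  · rw [cf_single]
    exact if_pos ⟨by simp; omega, by simp; omega⟩
  · rw [cf_single, if_neg]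
    simp only [Int.toNat_of_nonneg h'.1, Int.toNat_of_nonneg h'.2.2]
    rintro ⟨rfl, rfl⟩
    exact h ⟨rfl, rfl, h'⟩
  · obtain ⟨rfl, rfl, h⟩ := h
    exact absurd h h'
  · exact cf_zero i k

variable {i k : ℤ}

lemma cf_FM (u : TM n) (h : 0 ≤ i ∧ i < (n : ℤ) + 1 ∧ 0 ≤ k) :
    cf n (FM n u) i k = (i : ℂ) * cf n u (i - 1) k + cf n u i (k - 1) := by
  induction u using Finsupp.induction_linear with
  | zero => simp [cf_zero]
  | add u v hu hv => rw [map_add, cf_add, cf_add, cf_add, hu, hv]; ring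
  | single p c =>
    rw [FM, Finsupp.lsum_single, LinearMap.toSpanSingleton_apply, cf_smul, cf_add, cf_smul,
      cf_bv, cf_bv, cf_single, cf_single]
    split_ifs <;> first | (exfalso; omega) | (push_cast [*]; ring)

lemma cf_EM (u : TM n) (h : 0 ≤ i ∧ i < (n : ℤ) + 1 ∧ 0 ≤ k) :
    cf n (EM n u) i k =
      ((n : ℂ) - i) * cf n u (i + 1) k - ((k : ℂ) + 1) * k * cf n u i (k + 1) := by
  induction u using Finsupp.induction_linear with
  | zero => simp [cf_zero]
  | add u v hu hv => rw [map_add, cf_add, cf_add, cf_add, hu, hv]; ring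
  | single p c =>
    rw [EM, Finsupp.lsum_single, LinearMap.toSpanSingleton_apply, cf_smul, cf_sub, cf_smul,
      cf_smul, cf_bv, cf_bv, cf_single, cf_single]
    split_ifs <;> first | (exfalso; omega) | (push_cast [*]; ring)

lemma cf_HM (u : TM n) (h : 0 ≤ i ∧ i < (n : ℤ) + 1 ∧ 0 ≤ k) :
    cf n (HM n u) i k = ((n : ℂ) - 2 * i - 2 * k) * cf n u i k := by
  induction u using Finsupp.induction_linear with
  | zero => simp [cf_zero]
  | add u v hu hv => rw [map_add, cf_add, cf_add, hu, hv]; ring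
  | single p c =>
    rw [HM, Finsupp.lsum_single, LinearMap.toSpanSingleton_apply, cf_smul, cf_smul, cf_bv,
      cf_single]
    split_ifs <;> first | (exfalso; omega) | (push_cast [*]; ring)

lemma cf_FM_EM (u : TM n) (h : 0 ≤ i ∧ i < (n : ℤ) + 1 ∧ 0 ≤ k) :
    cf n ((FM n * EM n) u) i k =
      ((i : ℂ) * ((n : ℂ) - i + 1) - (k : ℂ) * ((k : ℂ) - 1)) * cf n u i k
        - (i : ℂ) * k * ((k : ℂ) + 1) * cf n u (i - 1) (k + 1)
        + ((n : ℂ) - i) * cf n u (i + 1) (k - 1) := by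
  have hF : (i : ℂ) * cf n (EM n u) (i - 1) k =
      (i : ℂ) *
        (((n : ℂ) - i + 1) * cf n u i k - ((k : ℂ) + 1) * k * cf n u (i - 1) (k + 1)) := by
    rcases h.1.eq_or_lt with rfl | hi
    · simp
    · rw [cf_EM u ⟨by omega, by omega, h.2.2⟩, sub_add_cancel]
      push_cast; ring
  have hE : cf n (EM n u) i (k - 1) =
      ((n : ℂ) - i) * cf n u (i + 1) (k - 1) - (k : ℂ) * ((k : ℂ) - 1) * cf n u i k := by
    rcases h.2.2.eq_or_lt with rfl | hk
    · rw [cf_of_out_of_range _ (by omega), cf_of_out_of_range _ (by omega)]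
      simp
    · rw [cf_EM u ⟨h.1, h.2.1, by omega⟩, sub_add_cancel]
      push_cast; ring
  rw [Module.End.mul_apply, cf_FM _ h, hF, hE]
  ring

lemma cf_FM_EM_sq (u : TM n) (h : 0 ≤ i ∧ i < (n : ℤ) + 1 ∧ 0 ≤ k) :
    cf n (((FM n * EM n) ^ 2) u) i k =
      cf n u (i - 2) (k + 2) * (((i : ℂ) - 1) * i * k * ((k : ℂ) + 1) ^ 2 * ((k : ℂ) + 2)) -
        cf n u (i - 1) (k + 1) *
          ((i : ℂ) * k * ((k : ℂ) + 1) * (2 * (i : ℂ) * ((n : ℂ) + 2 - i) - ((n : ℂ) + 2)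
            - 2 * (k : ℂ) ^ 2)) +
        cf n u i k *
          (((i : ℂ) * ((n : ℂ) - i + 1) - (k : ℂ) * ((k : ℂ) - 1)) ^ 2 -
            (i : ℂ) * k * ((k : ℂ) + 1) * ((n : ℂ) - i + 1) -
            ((i : ℂ) + 1) * ((k : ℂ) - 1) * k * ((n : ℂ) - i)) +
        cf n u (i + 1) (k - 1) *
          (((n : ℂ) - i) * ((n : ℂ) + 2 * (i : ℂ) * ((n : ℂ) - i) - 2 * ((k : ℂ) - 1) ^ 2)) +
        cf n u (i + 2) (k - 2) * (((n : ℂ) - i - 1) * ((n : ℂ) - i)) := by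
  -- At `i = 0`, `i = n` or `k = 0` the neighbouring coefficient of `FE u` is out of range;
  -- both sides then vanish, by the factor `i` or `n - i` or by `cf`'s zero convention.
  have hY : (i : ℂ) * k * ((k : ℂ) + 1) * cf n ((FM n * EM n) u) (i - 1) (k + 1) =
      (i : ℂ) * k * ((k : ℂ) + 1) *
        ((((i : ℂ) - 1) * ((n : ℂ) - i + 2) - ((k : ℂ) + 1) * k) * cf n u (i - 1) (k + 1)
          - ((i : ℂ) - 1) * ((k : ℂ) + 1) * ((k : ℂ) + 2) * cf n u (i - 2) (k + 2)
          + ((n : ℂ) - i + 1) * cf n u i k) := by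
    rcases h.1.eq_or_lt with rfl | hi
    · simp
    · rw [cf_FM_EM u ⟨by omega, by omega, by omega⟩, sub_add_cancel, add_sub_cancel_right,
        show i - 1 - 1 = i - 2 by ring, show k + 1 + 1 = k + 2 by ring]
      push_cast; ring
  have hZ : ((n : ℂ) - i) * cf n ((FM n * EM n) u) (i + 1) (k - 1) =
      ((n : ℂ) - i) *
        ((((i : ℂ) + 1) * ((n : ℂ) - i) - ((k : ℂ) - 1) * ((k : ℂ) - 2)) *
            cf n u (i + 1) (k - 1)
          - ((i : ℂ) + 1) * ((k : ℂ) - 1) * k * cf n u i k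
          + ((n : ℂ) - i - 1) * cf n u (i + 2) (k - 2)) := by
    rcases (show i < n ∨ i = n by omega) with hi | rfl
    · rcases h.2.2.eq_or_lt with rfl | hk
      · rw [cf_of_out_of_range _ (by omega), cf_of_out_of_range _ (by omega),
          cf_of_out_of_range (i := i + 2) _ (by omega)]
        simp
      · rw [cf_FM_EM u ⟨by omega, by omega, by omega⟩, add_sub_cancel_right, sub_add_cancel,
          show i + 1 + 1 = i + 2 by ring, show k - 1 - 1 = k - 2 by ring]
        push_cast; ring
    · simp
  rw [sq, Module.End.mul_apply, cf_FM_EM _ h, cf_FM_EM u h]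
  linear_combination (-1 : ℂ) * hY + hZ

def HasWeight (n : ℕ) (w : ℤ) (u : TM n) : Prop :=
  ∀ i k : ℤ, (n : ℤ) - 2 * i - 2 * k ≠ w → cf n u i k = 0

variable {w : ℤ} {u : TM n}

lemma hasWeight_of_apply_ne_zero
    (hu : ∀ (i : Fin (n + 1)) (k : ℕ), u (i, k) ≠ 0 →
      (n : ℤ) - 2 * ((i : ℕ) : ℤ) - 2 * k = w) :
    HasWeight n w u := by
  intro i k hik
  by_cases h : 0 ≤ i ∧ i < (n : ℤ) + 1 ∧ 0 ≤ k
  · lift i to ℕ using h.1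
    lift k to ℕ using h.2.2
    have hi : i < n + 1 := by exact_mod_cast h.2.1
    rw [show (i : ℤ) = ((⟨i, hi⟩ : Fin (n + 1)) : ℕ) from rfl, cf_natCast]
    exact not_not.mp fun hne => hik (hu _ _ hne)
  · exact cf_of_out_of_range u h

lemma HasWeight.FM_EM_apply (hu : HasWeight n w u) : HasWeight n w ((FM n * EM n) u) := by
  intro i k hik
  by_cases h : 0 ≤ i ∧ i < (n : ℤ) + 1 ∧ 0 ≤ k
  · rw [cf_FM_EM u h, hu i k hik, hu (i - 1) (k + 1) (by omega), hu (i + 1) (k - 1) (by omega)]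
    ring
  · exact cf_of_out_of_range _ h

lemma HasWeight.HM_apply (hu : HasWeight n w u) : HM n u = (w : ℂ) • u := by
  refine ext_cf fun i k hi => ?_
  rw [cf_HM u ⟨by positivity, by omega, by positivity⟩, cf_smul]
  by_cases hik : (n : ℤ) - 2 * i - 2 * k = w
  · rw [← hik]
    push_cast; ring
  · rw [hu _ _ hik, mul_zero, mul_zero]

lemma HasWeight.CasM_sub_apply (hu : HasWeight n w u) :
    (CasM n - ((w : ℂ) ^ 2 + 2 * w) • (1 : Module.End ℂ (TM n))) u =
      (4 : ℂ) • (FM n * EM n) u := by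
  simp only [CasM, LinearMap.sub_apply, LinearMap.add_apply, LinearMap.smul_apply,
    Module.End.mul_apply, Module.End.one_apply, hu.HM_apply, map_smul]
  module

lemma HasWeight.CasM_sub_sq_apply (hu : HasWeight n w u) :
    ((CasM n - ((w : ℂ) ^ 2 + 2 * w) • (1 : Module.End ℂ (TM n))) ^ 2) u =
      (16 : ℂ) • ((FM n * EM n) ^ 2) u := by
  rw [sq, Module.End.mul_apply, hu.CasM_sub_apply, map_smul, hu.FM_EM_apply.CasM_sub_apply,
    smul_smul, sq, Module.End.mul_apply]
  norm_num

end TM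

theorem stmt14_general (n s : ℕ) (a : TM n)
    (hsupp : ∀ (i : Fin (n + 1)) (k : ℕ), a (i, k) ≠ 0 →
      (n : ℤ) - 2 * ((i : ℕ) : ℤ) - 2 * (k : ℤ) = -(s : ℤ) - 2) :
    ((CasM n - ((s : ℂ) * ((s : ℂ) + 2)) • (1 : Module.End ℂ (TM n))) ^ 2) a = 0 ↔
      ∀ i k : ℕ, i ≤ n → (n : ℤ) - 2 * (i : ℤ) - 2 * (k : ℤ) = -(s : ℤ) - 2 →
        0 = cf n a ((i : ℤ) - 2) ((k : ℤ) + 2) *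
              (((i : ℂ) - 1) * (i : ℂ) * (k : ℂ) * ((k : ℂ) + 1) ^ 2 * ((k : ℂ) + 2)) -
            cf n a ((i : ℤ) - 1) ((k : ℤ) + 1) *
              ((i : ℂ) * (k : ℂ) * ((k : ℂ) + 1) *
                (2 * (i : ℂ) * ((n : ℂ) + 2 - (i : ℂ)) - ((n : ℂ) + 2) - 2 * (k : ℂ) ^ 2)) +
            cf n a (i : ℤ) (k : ℤ) *
              (((i : ℂ) * ((n : ℂ) - (i : ℂ) + 1) - (k : ℂ) * ((k : ℂ) - 1)) ^ 2 -
                (i : ℂ) * (k : ℂ) * ((k : ℂ) + 1) * ((n : ℂ) - (i : ℂ) + 1) -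
                ((i : ℂ) + 1) * ((k : ℂ) - 1) * (k : ℂ) * ((n : ℂ) - (i : ℂ))) +
            cf n a ((i : ℤ) + 1) ((k : ℤ) - 1) *
              (((n : ℂ) - (i : ℂ)) *
                ((n : ℂ) + 2 * (i : ℂ) * ((n : ℂ) - (i : ℂ)) - 2 * ((k : ℂ) - 1) ^ 2)) +
            cf n a ((i : ℤ) + 2) ((k : ℤ) - 2) *
              (((n : ℂ) - (i : ℂ) - 1) * ((n : ℂ) - (i : ℂ))) := by
  have ha : TM.HasWeight n (-(s : ℤ) - 2) a := TM.hasWeight_of_apply_ne_zero hsupp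
  have hFE2 : TM.HasWeight n (-(s : ℤ) - 2) (((FM n * EM n) ^ 2) a) := by
    rw [sq, Module.End.mul_apply]
    exact ha.FM_EM_apply.FM_EM_apply
  have hc : (s : ℂ) * ((s : ℂ) + 2) =
      ((-(s : ℤ) - 2 : ℤ) : ℂ) ^ 2 + 2 * ((-(s : ℤ) - 2 : ℤ) : ℂ) := by
    push_cast; ring
  rw [hc, ha.CasM_sub_sq_apply, smul_eq_zero, or_iff_right (by norm_num), TM.eq_zero_iff_forall_cf]
  refine forall₂_congr fun i k => forall_congr' fun hi => ?_
  have hcf := TM.cf_FM_EM_sq a (i := i) (k := k) ⟨by positivity, by omega, by positivity⟩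
  push_cast at hcf
  refine ⟨fun h hw => by rw [← hcf, h], fun h => ?_⟩
  by_cases hw : (n : ℤ) - 2 * (i : ℤ) - 2 * (k : ℤ) = -(s : ℤ) - 2
  · rw [hcf, h hw]
  · exact hFE2 i k hw

/-- Fix `n ≥ 2` and `0 ≤ s ≤ n-2` with `n - s` even, `c = s(s+2)`.  For a
finitely supported `β` supported on the weight space `n - 2i - 2k = -s-2`, the
vector `a = Σ β_{ik}·(v_i ⊗ w_k)` satisfies `(Ω - c)²(a) = 0` iff the
five-term recurrence holds at every `(i,k)` with `n - 2i - 2k = -s-2`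
(with `β` interpreted as `0` at out-of-range indices). -/
theorem stmt14 (n s : ℕ) (hn : 2 ≤ n) (hs : s ≤ n - 2) (hpar : (n - s) % 2 = 0)
    (a : TM n)
    (hsupp : ∀ (i : Fin (n + 1)) (k : ℕ), a (i, k) ≠ 0 →
      (n : ℤ) - 2 * ((i : ℕ) : ℤ) - 2 * (k : ℤ) = -(s : ℤ) - 2) :
    ((CasM n - ((s : ℂ) * ((s : ℂ) + 2)) • (1 : Module.End ℂ (TM n))) ^ 2) a = 0 ↔
      ∀ i k : ℕ, i ≤ n → (n : ℤ) - 2 * (i : ℤ) - 2 * (k : ℤ) = -(s : ℤ) - 2 →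
        0 = cf n a ((i : ℤ) - 2) ((k : ℤ) + 2) *
              (((i : ℂ) - 1) * (i : ℂ) * (k : ℂ) * ((k : ℂ) + 1) ^ 2 * ((k : ℂ) + 2)) -
            cf n a ((i : ℤ) - 1) ((k : ℤ) + 1) *
              ((i : ℂ) * (k : ℂ) * ((k : ℂ) + 1) *
                (2 * (i : ℂ) * ((n : ℂ) + 2 - (i : ℂ)) - ((n : ℂ) + 2) - 2 * (k : ℂ) ^ 2)) +
            cf n a (i : ℤ) (k : ℤ) *
              (((i : ℂ) * ((n : ℂ) - (i : ℂ) + 1) - (k : ℂ) * ((k : ℂ) - 1)) ^ 2 -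
                (i : ℂ) * (k : ℂ) * ((k : ℂ) + 1) * ((n : ℂ) - (i : ℂ) + 1) -
                ((i : ℂ) + 1) * ((k : ℂ) - 1) * (k : ℂ) * ((n : ℂ) - (i : ℂ))) +
            cf n a ((i : ℤ) + 1) ((k : ℤ) - 1) *
              (((n : ℂ) - (i : ℂ)) *
                ((n : ℂ) + 2 * (i : ℂ) * ((n : ℂ) - (i : ℂ)) - 2 * ((k : ℂ) - 1) ^ 2)) +
            cf n a ((i : ℤ) + 2) ((k : ℤ) - 2) *
              (((n : ℂ) - (i : ℂ) - 1) * ((n : ℂ) - (i : ℂ))) :=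
  stmt14_general n s a hsupp
end

section
/- (Casimir decomposition for weight modules with locally nilpotent e.) Let V be a complex vector space equipped with linear endomorphisms E, F, H satisfying the sl₂-relations H∘E − E∘H = 2E, H∘F − F∘H = −2F, E∘F − F∘E = H. Assume V is spanned by eigenvectors of H (V is a weight module) and that E acts locally nilpotently (for every v ∈ V there exists N with E^N(v) = 0). Let Ω = H² + 2H + 4FE. Then V has a Casimir decomposition: V is spanned by generalized eigenvectors of Ω, i.e., the supremum over c ∈ ℂ of the generalized eigenspaces ⋃_{i≥1} ker((Ω − c)^i) equals V. -/
/-!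
Write `Ω` for the Casimir operator and `S` for the sum of its generalized eigenspaces. Since `Ω`
commutes with `F`, the subspace `S` is `F`-stable. On the generalized `c'`-eigenspace, `Ω - c` is
a nilpotent operator plus the unit `c' - c`, hence surjective when `c ≠ c'`; it follows that
`(Ω - c) v ∈ S` forces `v ∈ S`. For a weight vector `v` of weight `μ` one has
`(Ω - (μ² + 2μ)) v = 4 F (E v)`, and `E v` is a weight vector killed by a smaller power of `E`,
so induction on that power puts every weight vector, and hence all of `V`, into `S`.
-/

namespace Module.End

section CommRing

variable {R M : Type*} [CommRing R] [AddCommGroup M] [Module R M]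

lemma iSup_ker_pow_succ_eq_maxGenEigenspace (f : End R M) (c : R) :
    ⨆ i : ℕ, LinearMap.ker ((f - c • 1) ^ (i + 1)) = f.maxGenEigenspace c := by
  refine le_antisymm (iSup_le fun i ↦ ?_) fun v hv ↦ ?_
  · rw [← genEigenspace_nat]
    exact genEigenspace_le_maximal f c (i + 1)
  · obtain ⟨k, hk⟩ := (mem_maxGenEigenspace f c v).mp hv
    exact Submodule.mem_iSup_of_mem k (by rw [LinearMap.mem_ker, pow_succ', mul_apply, hk, map_zero])

lemma mem_maxGenEigenspace_of_sub_smul_apply_mem {f : End R M} {c : R} {v : M}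
    (hv : (f - c • 1) v ∈ f.maxGenEigenspace c) : v ∈ f.maxGenEigenspace c := by
  obtain ⟨k, hk⟩ := (mem_maxGenEigenspace f c _).mp hv
  exact (mem_maxGenEigenspace f c v).mpr ⟨k + 1, by rwa [pow_succ, mul_apply]⟩

lemma iSup_maxGenEigenspace_le_comap_of_comm {f g : End R M} (h : Commute f g) :
    ⨆ c, f.maxGenEigenspace c ≤ (⨆ c, f.maxGenEigenspace c).comap g :=
  iSup_le fun c _ hv ↦ Submodule.mem_iSup_of_mem c (mapsTo_maxGenEigenspace_of_comm h c hv)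

lemma apply_apply_eq_add_smul_of_commutator_eq_smul {E H : End R M} {a μ : R} {v : M}
    (hHE : H * E - E * H = a • E) (hv : H v = μ • v) : H (E v) = (μ + a) • E v := by
  have h := LinearMap.congr_fun hHE v
  simp only [LinearMap.sub_apply, mul_apply, LinearMap.smul_apply, hv, map_smul] at h
  rw [add_smul, ← h]
  abel

end CommRing

section Field

variable {K V : Type*} [Field K] [AddCommGroup V] [Module K V]

lemma exists_sub_smul_apply_eq_of_mem_maxGenEigenspace (f : End K V) {c c' : K} (hcc' : c ≠ c')
    {v : V} (hv : v ∈ f.maxGenEigenspace c') :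
    ∃ u ∈ f.maxGenEigenspace c', (f - c • 1) u = v := by
  obtain ⟨k, hk⟩ := mem_genEigenspace_top.mp hv
  have hcomm (a : K) : Commute f (f - a • 1) :=
    (Commute.refl f).sub_right ((Commute.one_right f).smul_right a)
  have hdecomp : (f - c • 1).restrict (mapsTo_genEigenspace_of_comm (hcomm c) c' k)
      = (f - c' • 1).restrict (mapsTo_genEigenspace_of_comm (hcomm c') c' k)
        + algebraMap K _ (c' - c) := by
    ext x
    change (f - c • 1) (x : V) = (f - c' • 1) x + (c' - c) • (x : V)
    simp only [LinearMap.sub_apply, LinearMap.smul_apply, one_apply]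
    module
  have hunit : IsUnit ((f - c • 1).restrict (mapsTo_genEigenspace_of_comm (hcomm c) c' k)) := by
    rw [hdecomp]
    exact (isNilpotent_restrict_genEigenspace_nat f c' k).isUnit_add_right_of_commute
      ((isUnit_iff_ne_zero.mpr (sub_ne_zero.mpr hcc'.symm)).map _)
      (Algebra.commute_algebraMap_right _ _)
  obtain ⟨u, hu⟩ := (isUnit_iff _ |>.mp hunit).surjective ⟨v, mem_genEigenspace_nat.mpr hk⟩
  exact ⟨u, genEigenspace_le_maximal f c' k u.2, congrArg Subtype.val hu⟩

lemma iSup_maxGenEigenspace_le_map_sub_smul_sup (f : End K V) (c : K) :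
    ⨆ c', f.maxGenEigenspace c' ≤
      (⨆ c', f.maxGenEigenspace c').map (f - c • 1) ⊔ f.maxGenEigenspace c := by
  refine iSup_le fun c' ↦ ?_
  rcases eq_or_ne c c' with rfl | hcc'
  · exact le_sup_right
  · intro v hv
    obtain ⟨u, hu, rfl⟩ := exists_sub_smul_apply_eq_of_mem_maxGenEigenspace f hcc' hv
    exact Submodule.mem_sup_left (Submodule.mem_map_of_mem (Submodule.mem_iSup_of_mem c' hu))

lemma mem_iSup_maxGenEigenspace_of_sub_smul_apply_mem {f : End K V} {c : K} {v : V}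
    (hv : (f - c • 1) v ∈ ⨆ c', f.maxGenEigenspace c') : v ∈ ⨆ c', f.maxGenEigenspace c' := by
  obtain ⟨_, ⟨u, hu, rfl⟩, w, hw, huw⟩ :=
    Submodule.mem_sup.mp (iSup_maxGenEigenspace_le_map_sub_smul_sup f c hv)
  have hvu : v - u ∈ f.maxGenEigenspace c := by
    refine mem_maxGenEigenspace_of_sub_smul_apply_mem ?_
    rwa [map_sub, ← eq_sub_of_add_eq' huw]
  simpa using add_mem (Submodule.mem_iSup_of_mem c hvu) hu

end Field

end Module.End

def sl2Casimir (K : Type*) {A : Type*} [CommRing K] [Ring A] [Algebra K A] (E F H : A) : A :=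
  H * H + (2 : K) • H + (4 : K) • (F * E)

lemma commute_sl2Casimir_F {K A : Type*} [CommRing K] [Ring A] [Algebra K A] {E F H : A}
    (hHF : H * F - F * H = (-2 : K) • F) (hEF : E * F - F * E = H) :
    Commute (sl2Casimir K E F H) F := by
  have hX : H * F - F * H + (2 : K) • F = 0 := by
    rw [hHF, ← add_smul]; norm_num
  have hY : E * F - F * E - H = 0 := sub_eq_zero.mpr hEF
  rw [commute_iff_eq, ← sub_eq_zero]
  calc sl2Casimir K E F H * F - F * sl2Casimir K E F H
      = H * (H * F - F * H + (2 : K) • F) + (H * F - F * H + (2 : K) • F) * H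
        + (4 : K) • (F * (E * F - F * E - H)) := by
        simp only [sl2Casimir, mul_sub, sub_mul, add_mul, mul_add, smul_sub,
          smul_mul_assoc, mul_smul_comm, mul_assoc]
        module
    _ = 0 := by rw [hX, hY]; simp

section WeightVector

open Module.End

variable {K V : Type*} [Field K] [AddCommGroup V] [Module K V] {E F H : Module.End K V}

lemma sl2Casimir_sub_smul_apply_of_apply_eq_smul {μ : K} {v : V} (hv : H v = μ • v) :
    (sl2Casimir K E F H - (μ * μ + 2 * μ) • 1) v = (4 : K) • F (E v) := by
  simp only [sl2Casimir, LinearMap.sub_apply, LinearMap.add_apply, mul_apply,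
    LinearMap.smul_apply, one_apply, hv, map_smul, smul_smul, add_smul]
  module

lemma mem_iSup_maxGenEigenspace_sl2Casimir_of_pow_apply_eq_zero
    (hHE : H * E - E * H = (2 : K) • E) (hHF : H * F - F * H = (-2 : K) • F)
    (hEF : E * F - F * E = H) (N : ℕ) {μ : K} {v : V} (hv : H v = μ • v)
    (hN : (E ^ N) v = 0) : v ∈ ⨆ c, (sl2Casimir K E F H).maxGenEigenspace c := by
  induction N generalizing μ v with
  | zero =>
    rw [pow_zero, one_apply] at hN
    simp [hN]
  | succ N ih =>
    have hEv := ih (apply_apply_eq_add_smul_of_commutator_eq_smul hHE hv)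
      (by rwa [pow_succ, mul_apply] at hN)
    refine mem_iSup_maxGenEigenspace_of_sub_smul_apply_mem (c := μ * μ + 2 * μ) ?_
    rw [sl2Casimir_sub_smul_apply_of_apply_eq_smul hv]
    exact Submodule.smul_mem _ _
      (iSup_maxGenEigenspace_le_comap_of_comm (commute_sl2Casimir_F hHF hEF) hEv)

end WeightVector

/-- (Casimir decomposition for weight modules with locally nilpotent `e`.)
Let `V` be a complex vector space with endomorphisms `E`, `F`, `H` satisfying
the `sl₂`-relations.  If `V` is spanned by eigenvectors of `H` (a weight
module) and `E` acts locally nilpotently, then for `Ω = H² + 2H + 4FE` the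
supremum over `c ∈ ℂ` of the generalized eigenspaces `⋃_{i≥1} ker((Ω - c)^i)`
equals `V`: `V` has a Casimir decomposition. -/
theorem stmt19 (V : Type*) [AddCommGroup V] [Module ℂ V]
    (E F H : Module.End ℂ V)
    (hHE : H * E - E * H = (2 : ℂ) • E)
    (hHF : H * F - F * H = (-2 : ℂ) • F)
    (hEF : E * F - F * E = H)
    (hweight : Submodule.span ℂ {v : V | ∃ μ : ℂ, H v = μ • v} = ⊤)
    (hnilp : ∀ v : V, ∃ N : ℕ, (E ^ N) v = 0) :
    (⨆ (c : ℂ) (i : ℕ),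
        LinearMap.ker (((H * H + (2 : ℂ) • H + (4 : ℂ) • (F * E)) -
          c • (1 : Module.End ℂ V)) ^ (i + 1))) = ⊤ := by
  simp_rw [Module.End.iSup_ker_pow_succ_eq_maxGenEigenspace]
  rw [eq_top_iff, ← hweight, Submodule.span_le]
  rintro v ⟨μ, hμ⟩
  obtain ⟨N, hN⟩ := hnilp v
  exact mem_iSup_maxGenEigenspace_sl2Casimir_of_pow_apply_eq_zero hHE hHF hEF N hμ hN
end
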